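/- Let F be a field, μ, Γ, n, R natural numbers, and T : Fin Γ → Matrix (Fin μ) (Fin μ) F a family of pairwise commuting matrices, and w : Fin μ → F. For α : Fin Γ → ℕ write P(α) = (∏_{j ∈ Fin Γ} (T j)^{α j}).mulVec w. Define the sets V₁ = { P(α) : ∃ m < R, ∀ j, α j ∈ Icc (m·(n+1)+1) (m·(n+1)+n+1) } and V₂ = { P(α) : ∃ m < R, ∀ j, α j ∈ Icc (m·(n+1)+1) (m·(n+1)+n) }. Then for every l ∈ Fin Γ and every v ∈ V₂, (T l).mulVec v ∈ V₁. -/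
import Mathlib

lemma mul_ofFn_prod_update {M : Type*} [Monoid M] :
    ∀ {Γ : ℕ} (f : Fin Γ → M) (c : M), (∀ j, Commute c (f j)) → ∀ (l : Fin Γ),
      c * (List.ofFn f).prod = (List.ofFn (Function.update f l (c * f l))).prod := by
  intro Γ
  induction Γ with
  | zero => intro f c hc l; exact l.elim0
  | succ Γ ih =>
    intro f c hc l
    refine Fin.cases ?_ ?_ l
    · have h1 : (List.ofFn fun i : Fin Γ => Function.update f 0 (c * f 0) i.succ) =
          List.ofFn fun i : Fin Γ => f i.succ := by
        congr 1
      rw [List.ofFn_succ, List.ofFn_succ, List.prod_cons, List.prod_cons,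
        Function.update_self, h1, mul_assoc]
    · intro i
      have hcomp : (List.ofFn fun j : Fin Γ => Function.update f i.succ (c * f i.succ) j.succ) =
          List.ofFn (Function.update (fun j : Fin Γ => f j.succ) i (c * f i.succ)) := by
        congr 1
        funext j
        by_cases h : j = i
        · subst h; simp [Function.update]
        · have hne : Fin.succ j ≠ Fin.succ i := fun hh => h (Fin.succ_injective _ hh)
          simp [Function.update, h, hne]
      rw [List.ofFn_succ, List.ofFn_succ, List.prod_cons, List.prod_cons]
      have h0 : Function.update f i.succ (c * f i.succ) 0 = f 0 := by
        simp [Function.update, (Fin.succ_ne_zero i).symm]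
      rw [h0, hcomp, ← ih (fun j : Fin Γ => f j.succ) c (fun j => hc _) i,
        ← mul_assoc, (hc 0).eq, mul_assoc]

/-- Key property of the beamforming construction: multiplying any column of
`V₂` (exponents in a block `{m(n+1)+1, …, m(n+1)+n}`) by any `T l` yields a
column of `V₁` (exponents in the block `{m(n+1)+1, …, m(n+1)+n+1}`), given
that the matrices `T j` pairwise commute. -/
theorem alignment_closure_of_commuting
    {F : Type*} [Field F] (μ Γ n R : ℕ)
    (T : Fin Γ → Matrix (Fin μ) (Fin μ) F)
    (hcomm : ∀ i j, T i * T j = T j * T i)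
    (w : Fin μ → F)
    (V₁ V₂ : Set (Fin μ → F))
    (hV₁ : V₁ = { v | ∃ α : Fin Γ → ℕ,
      (∃ m < R, ∀ j, α j ∈ Finset.Icc (m * (n + 1) + 1) (m * (n + 1) + n + 1)) ∧
      v = ((List.ofFn fun j => (T j) ^ (α j)).prod).mulVec w })
    (hV₂ : V₂ = { v | ∃ α : Fin Γ → ℕ,
      (∃ m < R, ∀ j, α j ∈ Finset.Icc (m * (n + 1) + 1) (m * (n + 1) + n)) ∧
      v = ((List.ofFn fun j => (T j) ^ (α j)).prod).mulVec w }) :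
    ∀ l : Fin Γ, ∀ v ∈ V₂, (T l).mulVec v ∈ V₁ := by
  subst hV₁ hV₂
  rintro l v ⟨α, ⟨m, hm, hα⟩, rfl⟩
  refine ⟨Function.update α l (α l + 1), ⟨m, hm, fun j => ?_⟩, ?_⟩
  · by_cases h : j = l
    · subst h
      have := hα j
      simp only [Finset.mem_Icc, Function.update_self] at this ⊢
      omega
    · have := hα j
      simp only [Finset.mem_Icc, Function.update_of_ne h] at this ⊢
      omega
  · rw [Matrix.mulVec_mulVec]
    have hc : ∀ j, Commute (T l) ((fun j => T j ^ α j) j) :=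
      fun j => Commute.pow_right (hcomm l j) _
    rw [mul_ofFn_prod_update (fun j => T j ^ α j) (T l) hc l]
    have hl : List.ofFn (Function.update (fun j => T j ^ α j) l (T l * T l ^ α l)) =
        List.ofFn fun j => T j ^ Function.update α l (α l + 1) j := by
      congr 1
      funext j
      by_cases h : j = l
      · subst h; simp [Function.update, pow_succ,
          (Commute.pow_right (hcomm j j) (α j)).eq]
      · simp [Function.update, h]
    rw [hl]
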